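/- Let x = (x₁,…,x_m) be a generating m-tuple in M_n(k). Then the simultaneous-conjugation orbit {(g·x₁·g⁻¹,…,g·x_m·g⁻¹) : g ∈ GL_n(k)}, regarded as a subset of k^{mn²} via matrix entries, is Zariski closed; that is, there exists an ideal I of the polynomial ring over k in mn² variables whose zero locus is exactly this orbit. -/

import Mathlib

/-!
Let `εₓ : k⟨X₁,…,X_m⟩ → Mₙ(k)` be the evaluation of noncommutative polynomials at `x`. The
entries of the relations `r ∈ ker εₓ`, evaluated at generic matrices, are polynomials in the
`m n²` matrix coordinates, and a tuple `y` is a common zero of all of them exactly when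
`ker εₓ ≤ ker ε_y`. Since `x` generates, `εₓ` is surjective, so `ε_y` then factors as `φ ∘ εₓ`
for an algebra endomorphism `φ` of `Mₙ(k)`; by Skolem–Noether `φ` is conjugation by some
`g ∈ GLₙ(k)`, and `y = φ x = g x g⁻¹`. Conversely every conjugate of `x` satisfies the relations
of `x`.
-/

theorem AlgHom.exists_comp_eq_of_ker_le {R A B C : Type*} [CommSemiring R] [Ring A] [Ring B]
    [Semiring C] [Algebra R A] [Algebra R B] [Algebra R C] {f : A →ₐ[R] B}
    (hf : Function.Surjective f) (g : A →ₐ[R] C) (h : RingHom.ker f ≤ RingHom.ker g) :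
    ∃ φ : B →ₐ[R] C, φ.comp f = g :=
  ⟨(Ideal.Quotient.liftₐ _ g h).comp (Ideal.quotientKerAlgEquivOfSurjective hf).symm.toAlgHom,
    AlgHom.ext fun a => by simp; rfl⟩

namespace Matrix

open MvPolynomial

variable {R ι n : Type*} [CommSemiring R] [Fintype n] [DecidableEq n]

-- `Mₙ(k)` is simple, so `φ` is injective, hence an automorphism; automorphisms of
-- `End k (n → k)` are inner.
theorem exists_eq_conj_of_algHom {k : Type*} [Field k] (φ : Matrix n n k →ₐ[k] Matrix n n k) :
    ∃ g : GL n k, ∀ A, φ A = (g : Matrix n n k) * A * (↑g⁻¹ : Matrix n n k) := by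
  cases isEmpty_or_nonempty n
  · exact ⟨1, fun A => Subsingleton.elim _ _⟩
  have hinj : Function.Injective φ := (IsSimpleRing.injective_ringHom_or_subsingleton_codomain
    φ.toRingHom).resolve_right (not_subsingleton _)
  have hbij : Function.Bijective φ :=
    ⟨hinj, LinearMap.injective_iff_surjective (f := φ.toLinearMap) |>.mp hinj⟩
  obtain ⟨T, hT⟩ := (toLinAlgEquiv'.symm.trans
    ((AlgEquiv.ofBijective φ hbij).trans toLinAlgEquiv')).eq_linearEquivConjAlgEquiv
  set g := GeneralLinearGroup.toLin.symm (.ofLinearEquiv T)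
  have hg : toLinAlgEquiv' (g : Matrix n n k) = T :=
    congr_arg Units.val (GeneralLinearGroup.toLin.apply_symm_apply _)
  have hg_inv : toLinAlgEquiv' (↑g⁻¹ : Matrix n n k) = T.symm := by
    have := congr_arg Units.val (map_inv GeneralLinearGroup.toLin g)
    rwa [GeneralLinearGroup.toLin.apply_symm_apply] at this
  refine ⟨g, fun A => toLinAlgEquiv'.injective ?_⟩
  have hφA := congr($hT (toLinAlgEquiv' A))
  simp only [AlgEquiv.trans_apply, AlgEquiv.symm_apply_apply, AlgEquiv.ofBijective_apply] at hφA
  rw [hφA, map_mul, map_mul, hg, hg_inv]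
  rfl

variable (R ι n) in
noncomputable def genericTuple : ι → Matrix n n (MvPolynomial (ι × n × n) R) :=
  fun i => of fun a b => X (i, a, b)

theorem eval_lift_genericTuple_apply (y : ι → Matrix n n R) (r : FreeAlgebra R ι) (a b : n) :
    eval (fun v : ι × n × n => y v.1 v.2.1 v.2.2) (FreeAlgebra.lift R (genericTuple R ι n) r a b) =
      FreeAlgebra.lift R y r a b := by
  have hcomp : (aeval fun v : ι × n × n => y v.1 v.2.1 v.2.2).mapMatrix.comp
      (FreeAlgebra.lift R (genericTuple R ι n)) = FreeAlgebra.lift R y :=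
    FreeAlgebra.hom_ext <| funext fun i => by ext; simp [genericTuple]
  rw [← hcomp, ← coe_aeval_eq_eval]
  rfl

noncomputable def relationIdeal (x : ι → Matrix n n R) : Ideal (MvPolynomial (ι × n × n) R) :=
  Ideal.span {p | ∃ r ∈ RingHom.ker (FreeAlgebra.lift R x), ∃ a b,
    p = FreeAlgebra.lift R (genericTuple R ι n) r a b}

theorem forall_eval_relationIdeal_eq_zero_iff (x y : ι → Matrix n n R) :
    (∀ f ∈ relationIdeal x, eval (fun v : ι × n × n => y v.1 v.2.1 v.2.2) f = 0) ↔
      RingHom.ker (FreeAlgebra.lift R x) ≤ RingHom.ker (FreeAlgebra.lift R y) := by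
  constructor
  · intro h r hr
    rw [RingHom.mem_ker]
    ext a b
    rw [← eval_lift_genericTuple_apply]
    exact h _ (Ideal.subset_span ⟨r, hr, a, b, rfl⟩)
  · intro h f hf
    refine Ideal.span_le (I := RingHom.ker (eval _)) |>.mpr ?_ hf
    rintro _ ⟨r, hr, a, b, rfl⟩
    rw [SetLike.mem_coe, RingHom.mem_ker, eval_lift_genericTuple_apply, RingHom.mem_ker.mp (h hr)]
    rfl

theorem ker_lift_le_iff_exists_conj {k : Type*} [Field k] {x : ι → Matrix n n k}
    (hx : Algebra.adjoin k (Set.range x) = ⊤) (y : ι → Matrix n n k) :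
    RingHom.ker (FreeAlgebra.lift k x) ≤ RingHom.ker (FreeAlgebra.lift k y) ↔
      ∃ g : GL n k, ∀ i, y i = (g : Matrix n n k) * x i * (↑g⁻¹ : Matrix n n k) := by
  constructor
  · intro h
    have hsurj : Function.Surjective (FreeAlgebra.lift k x) := by
      rw [← AlgHom.range_eq_top, ← Algebra.adjoin_range_eq_range_freeAlgebra_lift, hx]
    obtain ⟨φ, hφ⟩ := AlgHom.exists_comp_eq_of_ker_le hsurj _ h
    obtain ⟨g, hg⟩ := exists_eq_conj_of_algHom φ
    refine ⟨g, fun i => ?_⟩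
    rw [← hg, ← FreeAlgebra.lift_ι_apply (R := k) x, ← AlgHom.comp_apply, hφ,
      FreeAlgebra.lift_ι_apply]
  · rintro ⟨g, hg⟩ r hr
    have hconj : FreeAlgebra.lift k y =
        (MulSemiringAction.toAlgEquiv k _ (ConjAct.toConjAct g)).toAlgHom.comp
          (FreeAlgebra.lift k x) :=
      FreeAlgebra.hom_ext <| funext fun i => by simp [hg, ConjAct.units_smul_def]
    rw [RingHom.mem_ker, hconj, AlgHom.comp_apply, RingHom.mem_ker.mp hr, map_zero]

end Matrix

theorem stmt_2_general (k : Type*) [Field k] (m n : ℕ)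
    (x : Fin m → Matrix (Fin n) (Fin n) k)
    (hx : Algebra.adjoin k (Set.range x) = ⊤) :
    ∃ I : Ideal (MvPolynomial (Fin m × Fin n × Fin n) k),
      ∀ y : Fin m → Matrix (Fin n) (Fin n) k,
        (∀ f ∈ I, MvPolynomial.eval (fun v : Fin m × Fin n × Fin n => y v.1 v.2.1 v.2.2) f = 0)
        ↔ ∃ g : GL (Fin n) k, ∀ i : Fin m,
            y i = (g : Matrix (Fin n) (Fin n) k) * x i * (↑g⁻¹ : Matrix (Fin n) (Fin n) k) :=
  ⟨Matrix.relationIdeal x, fun y =>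
    (Matrix.forall_eval_relationIdeal_eq_zero_iff x y).trans
      (Matrix.ker_lift_le_iff_exists_conj hx y)⟩

/-- The simultaneous-conjugation orbit of a generating `m`-tuple of `n×n`
matrices is Zariski closed: there is an ideal of the polynomial ring in the `m·n²`
matrix-entry coordinates whose zero locus is exactly the orbit. -/
theorem stmt_2 (k : Type*) [Field k] [IsAlgClosed k] (m n : ℕ) [NeZero m] [NeZero n]
    (x : Fin m → Matrix (Fin n) (Fin n) k)
    (hx : Algebra.adjoin k (Set.range x) = ⊤) :
    ∃ I : Ideal (MvPolynomial (Fin m × Fin n × Fin n) k),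
      ∀ y : Fin m → Matrix (Fin n) (Fin n) k,
        (∀ f ∈ I, MvPolynomial.eval (fun v : Fin m × Fin n × Fin n => y v.1 v.2.1 v.2.2) f = 0)
        ↔ ∃ g : GL (Fin n) k, ∀ i : Fin m,
            y i = (g : Matrix (Fin n) (Fin n) k) * x i * (↑g⁻¹ : Matrix (Fin n) (Fin n) k) :=
  stmt_2_general k m n x hx
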